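/- arXiv:quant-ph/0606168 — 3 statements merged into one kernel-verified Lean document; each statement's English description precedes it below -/
import Mathlib

section
/- Let λ₁ ≥ λ₂ ≥ λ₃ ≥ λ₄ ≥ 0 be real numbers. Then (λ₁+λ₂+λ₃+λ₄)² + (max{0, λ₁-λ₂-λ₃-λ₄})² ≥ 2(λ₁²+λ₂²+λ₃²+λ₄²). -/
/-- The Claim `τ_a + τ ≥ S_L(A:B)`: for `λ₁ ≥ λ₂ ≥ λ₃ ≥ λ₄ ≥ 0`,
`(λ₁+λ₂+λ₃+λ₄)² + (max{0, λ₁-λ₂-λ₃-λ₄})² ≥ 2(λ₁²+λ₂²+λ₃²+λ₄²)`. -/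
theorem tangle_add_assistance_ge (l1 l2 l3 l4 : ℝ)
    (h12 : l1 ≥ l2) (h23 : l2 ≥ l3) (h34 : l3 ≥ l4) (h4 : l4 ≥ 0) :
    (l1 + l2 + l3 + l4) ^ 2 + (max 0 (l1 - l2 - l3 - l4)) ^ 2 ≥
      2 * (l1 ^ 2 + l2 ^ 2 + l3 ^ 2 + l4 ^ 2) := by
  rcases le_total (l1 - l2 - l3 - l4) 0 with h | h
  · rw [max_eq_left h]
    nlinarith [mul_nonneg (sub_nonneg.2 h23) (sub_nonneg.2 h34),
      mul_nonneg (sub_nonneg.2 h12) h4, mul_nonneg (sub_nonneg.2 h34) h4]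
  · rw [max_eq_right h]
    nlinarith [mul_nonneg (sub_nonneg.2 h23) h4,
      mul_nonneg (sub_nonneg.2 h34) h4, mul_nonneg h h4]
end

section
/- Let Δ ≥ 3 and define the 2^{Δ-1} × 2^{Δ-1} real symmetric matrix V by V_{x,y} = -1 if the binary strings of x and y (of length Δ-1) differ in all Δ-1 positions, V_{x,y} = 1 if they differ in exactly one position, and V_{x,y} = 0 otherwise. Then for every y ∈ {0,...,2^{Δ-1}-1}, the column of the matrix P_{Δ-1} (with entries (P)_{x,y} = (-1)^{x·y}) indexed by y is an eigenvector of V with eigenvalue λ_y = Σ_{k=1}^{Δ-1} (-1)^{y_k} - (-1)^{Σ_k y_k}. -/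
/-!
Identify `{0,…,2^n-1}` with `(ℤ/2)^n` via binary digits, so that Hamming distance between
`x` and `z` is the bit weight of `x ^^^ z`. Then `V x z = g (x ^^^ z)` is a convolution
operator, and the columns of `P_n` are the characters `χ_y(x) = (-1)^{x·y}` of `(ℤ/2)^n`,
which diagonalize every convolution: the eigenvalue is `∑_w g w χ_y(w)`. Here `g` is `1` on
the weight-one words `2^k` and `-1` on the all-ones word `2^n - 1` (these cases differ as
`n ≥ 2`), and `χ_y(2^k) = (-1)^{y_k}`, `χ_y(2^n - 1) = (-1)^{∑ y_k}`.
-/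


open Finset Matrix

theorem mulVec_eq_smul_of_xor_invariant {α R : Type*} [Fintype α] [XorOp α] [Zero α]
    [LawfulXor α] [CommSemiring R] (g χ : α → R) (hχ : ∀ a b, χ (a ^^^ b) = χ a * χ b) :
    (Matrix.of fun x z => g (x ^^^ z)) *ᵥ χ = (∑ w, g w * χ w) • χ := by
  ext x
  calc ∑ z, g (x ^^^ z) * χ z
      = ∑ w, g w * χ (x ^^^ w) := (Fintype.sum_equiv (Equiv.xor x) _ _ (by simp)).symm
    _ = (∑ w, g w * χ w) * χ x := by
      simp only [hχ, sum_mul]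
      exact sum_congr rfl fun w _ => by ring

namespace Nat

theorem eq_of_testBit_eq_of_lt_two_pow {n a b : ℕ} (ha : a < 2 ^ n) (hb : b < 2 ^ n)
    (h : ∀ k < n, a.testBit k = b.testBit k) : a = b := by
  refine eq_of_testBit_eq fun k => ?_
  rcases lt_or_ge k n with hk | hk
  · exact h k hk
  · have := Nat.pow_le_pow_right two_pos hk
    rw [testBit_lt_two_pow (ha.trans_le this), testBit_lt_two_pow (hb.trans_le this)]

def bitSupport (n w : ℕ) : Finset ℕ := {k ∈ range n | w.testBit k}

theorem bitSupport_subset (n w : ℕ) : bitSupport n w ⊆ range n := filter_subset _ _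

theorem bitSupport_injOn (n : ℕ) : Set.InjOn (bitSupport n) (range (2 ^ n)) := by
  intro a ha b hb hab
  refine eq_of_testBit_eq_of_lt_two_pow (mem_range.1 ha) (mem_range.1 hb) fun k hk => ?_
  have := congrArg (k ∈ ·) hab
  simpa [bitSupport, hk] using this

theorem bitSupport_two_pow_sub_one (n : ℕ) : bitSupport n (2 ^ n - 1) = range n := by
  ext k; simp +contextual [bitSupport]

theorem bitSupport_two_pow {n k : ℕ} (hk : k < n) : bitSupport n (2 ^ k) = {k} := by
  ext j
  simp only [bitSupport, testBit_two_pow, decide_eq_true_eq, mem_filter, mem_range, mem_singleton]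
  omega

theorem bitSupport_xor (n a b : ℕ) :
    bitSupport n (a ^^^ b) = {k ∈ range n | a.testBit k ≠ b.testBit k} := by
  simp [bitSupport, testBit_xor]

end Nat

open Nat

def hammingKernel (n w : ℕ) : ℝ :=
  if #(bitSupport n w) = n then -1 else if #(bitSupport n w) = 1 then 1 else 0

theorem filter_card_bitSupport_eq_self (n : ℕ) :
    {w ∈ range (2 ^ n) | #(bitSupport n w) = n} = {2 ^ n - 1} := by
  have hlt : 2 ^ n - 1 ∈ range (2 ^ n) := mem_range.2 (Nat.sub_lt (Nat.two_pow_pos n) one_pos)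
  ext w
  simp only [mem_filter, mem_singleton]
  constructor
  · rintro ⟨hw, hcard⟩
    refine bitSupport_injOn n hw hlt ?_
    rw [bitSupport_two_pow_sub_one]
    exact eq_of_subset_of_card_le (bitSupport_subset n w) (by simp [hcard])
  · rintro rfl
    simp [hlt, bitSupport_two_pow_sub_one]

theorem filter_card_bitSupport_eq_one (n : ℕ) :
    {w ∈ range (2 ^ n) | #(bitSupport n w) = 1} = (range n).image (2 ^ ·) := by
  ext w
  simp only [mem_filter, mem_image, mem_range, card_eq_one]
  constructor
  · rintro ⟨hw, k, hk⟩
    have hkn : k < n := mem_range.1 (bitSupport_subset n w (hk ▸ mem_singleton_self k))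
    refine ⟨k, hkn, bitSupport_injOn n ?_ (mem_range.2 hw) ?_⟩
    · exact mem_range.2 (Nat.pow_lt_pow_right one_lt_two hkn)
    · rw [hk, bitSupport_two_pow hkn]
  · rintro ⟨k, hk, rfl⟩
    exact ⟨Nat.pow_lt_pow_right one_lt_two hk, k, bitSupport_two_pow hk⟩

theorem sum_hammingKernel_mul {n : ℕ} (hn : 2 ≤ n) (f : ℕ → ℝ) :
    ∑ w ∈ range (2 ^ n), hammingKernel n w * f w =
      ∑ k ∈ range n, f (2 ^ k) - f (2 ^ n - 1) := by
  have hsplit : ∀ w, hammingKernel n w * f w =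
      (if #(bitSupport n w) = 1 then f w else 0) - (if #(bitSupport n w) = n then f w else 0) := by
    intro w
    unfold hammingKernel
    split_ifs <;> first | omega | ring
  rw [sum_congr rfl fun w _ => hsplit w, sum_sub_distrib, ← sum_filter, ← sum_filter,
    filter_card_bitSupport_eq_one, filter_card_bitSupport_eq_self, sum_singleton,
    sum_image fun a _ b _ h => Nat.pow_right_injective le_rfl h]

def walsh (n y x : ℕ) : ℝ := (-1) ^ #{k ∈ range n | x.testBit k ∧ y.testBit k}

theorem walsh_eq_prod (n y x : ℕ) :
    walsh n y x = ∏ k ∈ range n, if x.testBit k ∧ y.testBit k then -1 else 1 := by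
  rw [walsh, ← prod_filter, prod_const]

theorem walsh_xor (n y a b : ℕ) : walsh n y (a ^^^ b) = walsh n y a * walsh n y b := by
  simp only [walsh_eq_prod, ← prod_mul_distrib, testBit_xor]
  refine prod_congr rfl fun k _ => ?_
  cases a.testBit k <;> cases b.testBit k <;> cases y.testBit k <;> norm_num

theorem walsh_two_pow {n k : ℕ} (y : ℕ) (hk : k < n) :
    walsh n y (2 ^ k) = (-1) ^ (if y.testBit k then 1 else 0) := by
  rw [walsh, filter_and, ← bitSupport, bitSupport_two_pow hk]
  split_ifs with h
  · rw [singleton_inter_of_mem (by simp [hk, h]), card_singleton, pow_one]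
  · rw [singleton_inter_of_notMem (by simp [h]), card_empty, pow_zero]

theorem walsh_two_pow_sub_one (n y : ℕ) :
    walsh n y (2 ^ n - 1) = (-1) ^ #{k ∈ range n | y.testBit k} := by
  rw [walsh, filter_and, ← bitSupport, bitSupport_two_pow_sub_one,
    inter_eq_right.2 (filter_subset _ _)]

theorem hammingKernel_mulVec_walsh {n : ℕ} (hn : 2 ≤ n) (y : ℕ) :
    (Matrix.of fun x z : Fin (2 ^ n) => hammingKernel n ↑(x ^^^ z)) *ᵥ (fun x => walsh n y x) =
      (∑ k ∈ range n, (-1 : ℝ) ^ (if y.testBit k then 1 else 0) -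
        (-1) ^ #{k ∈ range n | y.testBit k}) • fun x : Fin (2 ^ n) => walsh n y x := by
  rw [mulVec_eq_smul_of_xor_invariant (fun w : Fin (2 ^ n) => hammingKernel n w)
      (fun x => walsh n y x) fun a b => by rw [Fin.xor_val_of_two_pow, walsh_xor],
    Fin.sum_univ_eq_sum_range (fun w => hammingKernel n w * walsh n y w),
    sum_hammingKernel_mul hn, walsh_two_pow_sub_one,
    sum_congr rfl fun k hk => walsh_two_pow y (mem_range.1 hk)]

/-- The columns of `P_{Δ-1}` (entries `(-1)^(x·y)`) are eigenvectors of the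
combinatorial matrix `V` (entry `-1` at Hamming distance `Δ-1`, entry `1` at
Hamming distance `1`, zero otherwise), with eigenvalues
`λ_y = Σ_k (-1)^{y_k} - (-1)^{Σ_k y_k}`. -/
theorem V_eigenvectors (Δ : ℕ) (hΔ : 3 ≤ Δ)
    (V : Matrix (Fin (2 ^ (Δ - 1))) (Fin (2 ^ (Δ - 1))) ℝ)
    (hV : ∀ x y : Fin (2 ^ (Δ - 1)),
      V x y =
        if ((Finset.range (Δ - 1)).filter
            (fun k => (x : ℕ).testBit k ≠ (y : ℕ).testBit k)).card = Δ - 1 then -1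
        else if ((Finset.range (Δ - 1)).filter
            (fun k => (x : ℕ).testBit k ≠ (y : ℕ).testBit k)).card = 1 then 1
        else 0) :
    ∀ y : Fin (2 ^ (Δ - 1)),
      V.mulVec (fun x => (-1 : ℝ) ^ (((Finset.range (Δ - 1)).filter
          (fun k => (x : ℕ).testBit k ∧ (y : ℕ).testBit k)).card)) =
        ((∑ k ∈ Finset.range (Δ - 1), (-1 : ℝ) ^ (if (y : ℕ).testBit k then 1 else 0)) -
            (-1 : ℝ) ^ (((Finset.range (Δ - 1)).filter
              (fun k => (y : ℕ).testBit k)).card)) •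
          (fun x : Fin (2 ^ (Δ - 1)) => (-1 : ℝ) ^ (((Finset.range (Δ - 1)).filter
            (fun k => (x : ℕ).testBit k ∧ (y : ℕ).testBit k)).card)) := by
  intro y
  have hV_xor :
      V = Matrix.of fun x z : Fin (2 ^ (Δ - 1)) => hammingKernel (Δ - 1) ↑(x ^^^ z) := by
    ext x z
    rw [hV, Matrix.of_apply, hammingKernel, Fin.xor_val_of_two_pow, bitSupport_xor]
  rw [hV_xor]
  exact hammingKernel_mulVec_walsh (by omega) y
end

section
/- For any bipartite density matrix ρ^{AB} on ℂ² ⊗ ℂ², Tr((ρ^A)²) + Tr((ρ^B)²) ≤ 1 + Tr((ρ^{AB})²), i.e., the linear mutual entropy S_L(A:B) = S_L(ρ^A) + S_L(ρ^B) - S_L(ρ^{AB}) is nonnegative. -/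
/-!
Wootters' spin flip `ρ̃ = (σ_y ⊗ σ_y) ρ* (σ_y ⊗ σ_y)` of a two-qubit matrix equals
`Tr ρ · 1 - ρ_A ⊗ 1 - 1 ⊗ ρ_B + ρ`, because conjugating the transpose of a `2 × 2` matrix by
`σ_y` gives its adjugate `Tr M · 1 - M`. Taking the trace against `ρ` gives
`Tr (ρ ρ̃) = (Tr ρ)² - Tr ρ_A² - Tr ρ_B² + Tr ρ²`, and `ρ̃` is again positive semidefinite,
so the left-hand side is the trace of a product of two positive semidefinite matrices,
hence nonnegative.
-/

open Kronecker
open scoped ComplexOrder MatrixOrder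

namespace Matrix

theorem PosSemidef.trace_mul_nonneg {𝕜 n : Type*} [RCLike 𝕜] [Fintype n]
    {A B : Matrix n n 𝕜} (hA : A.PosSemidef) (hB : B.PosSemidef) : 0 ≤ (A * B).trace := by
  classical
  obtain ⟨X, rfl⟩ := CStarAlgebra.nonneg_iff_eq_star_mul_self.mp hB.nonneg
  rw [star_eq_conjTranspose, ← Matrix.mul_assoc, trace_mul_cycle]
  exact (hA.mul_mul_conjTranspose_same X).trace_nonneg

section PartialTrace

variable {m n R : Type*} [Fintype m] [Fintype n] [CommSemiring R]

def partialTraceRight (ρ : Matrix (m × n) (m × n) R) : Matrix m m R :=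
  of fun i j => ∑ b, ρ (i, b) (j, b)

def partialTraceLeft (ρ : Matrix (m × n) (m × n) R) : Matrix n n R :=
  of fun a b => ∑ i, ρ (i, a) (i, b)

theorem trace_mul_kronecker_one [DecidableEq n] (ρ : Matrix (m × n) (m × n) R)
    (A : Matrix m m R) :
    (ρ * (A ⊗ₖ (1 : Matrix n n R))).trace = (partialTraceRight ρ * A).trace := by
  simp only [trace, diag, mul_apply, kronecker_apply, one_apply, partialTraceRight, of_apply,
    Fintype.sum_prod_type, mul_ite, mul_one, mul_zero, Finset.sum_ite_eq', Finset.mem_univ,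
    if_true, Finset.sum_mul]
  exact Finset.sum_congr rfl fun _ _ => Finset.sum_comm

theorem trace_mul_one_kronecker [DecidableEq m] (ρ : Matrix (m × n) (m × n) R)
    (B : Matrix n n R) :
    (ρ * ((1 : Matrix m m R) ⊗ₖ B)).trace = (partialTraceLeft ρ * B).trace := by
  simp only [trace, diag, mul_apply, kronecker_apply, one_apply, partialTraceLeft, of_apply,
    Fintype.sum_prod_type, ite_mul, one_mul, zero_mul, mul_ite, mul_zero, Finset.sum_ite_irrel,
    Finset.sum_const_zero, Finset.sum_ite_eq', Finset.mem_univ, if_true, Finset.sum_mul]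
  rw [Finset.sum_comm]
  exact Finset.sum_congr rfl fun _ _ => Finset.sum_comm

end PartialTrace

section SpinFlip

variable {R : Type*} [CommRing R] [StarRing R]

/-- The real matrix `!![0, -1; 1, 0]` is `-i σ_y`, and `ρᵀ = ρ*` for Hermitian `ρ`. -/
def spinFlip (ρ : Matrix (Fin 2 × Fin 2) (Fin 2 × Fin 2) R) :
    Matrix (Fin 2 × Fin 2) (Fin 2 × Fin 2) R :=
  (!![0, -1; 1, 0] ⊗ₖ !![0, -1; 1, 0]) * ρᵀ * (!![0, -1; 1, 0] ⊗ₖ !![0, -1; 1, 0])ᴴ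

theorem spinFlip_eq (ρ : Matrix (Fin 2 × Fin 2) (Fin 2 × Fin 2) R) :
    spinFlip ρ = ρ.trace • 1 - partialTraceRight ρ ⊗ₖ 1 - 1 ⊗ₖ partialTraceLeft ρ + ρ := by
  ext ⟨i, a⟩ ⟨j, b⟩
  simp only [spinFlip, partialTraceRight, partialTraceLeft, trace, diag, mul_apply,
    conjTranspose_apply, transpose_apply, kronecker_apply, Fintype.sum_prod_type,
    Fin.sum_univ_two, add_apply, sub_apply, smul_apply, one_apply, of_apply]
  fin_cases i <;> fin_cases a <;> fin_cases j <;> fin_cases b <;>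
    simp only [Fin.zero_eta, Fin.mk_one, Fin.isValue, cons_val', cons_val_zero, cons_val_one,
      cons_val_fin_one, mul_zero, zero_mul, mul_one, mul_neg, neg_neg, neg_zero, star_zero,
      star_one, star_neg, Prod.mk.injEq, zero_ne_one, one_ne_zero, and_true, and_false, and_self,
      if_true, if_false, smul_eq_mul] <;> ring

theorem trace_mul_spinFlip (ρ : Matrix (Fin 2 × Fin 2) (Fin 2 × Fin 2) R) :
    (ρ * spinFlip ρ).trace = ρ.trace ^ 2 - (partialTraceRight ρ * partialTraceRight ρ).trace -
      (partialTraceLeft ρ * partialTraceLeft ρ).trace + (ρ * ρ).trace := by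
  rw [spinFlip_eq, Matrix.mul_add, Matrix.mul_sub, Matrix.mul_sub, Matrix.mul_smul,
    Matrix.mul_one, trace_add, trace_sub, trace_sub, trace_smul, trace_mul_kronecker_one,
    trace_mul_one_kronecker, smul_eq_mul, sq]

theorem PosSemidef.spinFlip {𝕜 : Type*} [RCLike 𝕜]
    {ρ : Matrix (Fin 2 × Fin 2) (Fin 2 × Fin 2) 𝕜} (hρ : ρ.PosSemidef) :
    (spinFlip ρ).PosSemidef :=
  hρ.transpose.mul_mul_conjTranspose_same _

end SpinFlip

theorem PosSemidef.trace_partialTrace_mul_self_add_le {𝕜 : Type*} [RCLike 𝕜]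
    {ρ : Matrix (Fin 2 × Fin 2) (Fin 2 × Fin 2) 𝕜} (hρ : ρ.PosSemidef) :
    (partialTraceRight ρ * partialTraceRight ρ).trace +
        (partialTraceLeft ρ * partialTraceLeft ρ).trace ≤
      ρ.trace ^ 2 + (ρ * ρ).trace := by
  have h := hρ.trace_mul_nonneg hρ.spinFlip
  rw [trace_mul_spinFlip] at h
  rw [← sub_nonneg]
  convert h using 1
  ring

end Matrix

/-- For any two-qubit density matrix `ρ^{AB}`, the linear mutual entropy is
nonnegative: `Tr((ρ^A)²) + Tr((ρ^B)²) ≤ 1 + Tr((ρ^{AB})²)`, where `ρ^A, ρ^B`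
are the reduced density matrices. -/
theorem linear_mutual_entropy_nonneg
    (ρ : Matrix (Fin 2 × Fin 2) (Fin 2 × Fin 2) ℂ)
    (hpsd : ρ.PosSemidef) (htr : ρ.trace = 1)
    (ρA ρB : Matrix (Fin 2) (Fin 2) ℂ)
    (hρA : ∀ i j, ρA i j = ∑ b, ρ (i, b) (j, b))
    (hρB : ∀ a b, ρB a b = ∑ i, ρ (i, a) (i, b)) :
    Complex.re ((ρA * ρA).trace) + Complex.re ((ρB * ρB).trace) ≤
      1 + Complex.re ((ρ * ρ).trace) := by
  have hA : ρA = ρ.partialTraceRight := Matrix.ext hρA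
  have hB : ρB = ρ.partialTraceLeft := Matrix.ext hρB
  have h := (Complex.le_def.mp hpsd.trace_partialTrace_mul_self_add_le).1
  simpa [← hA, ← hB, htr] using h
end
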